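/- Let (d_n, k_n) be a sequence of admissible dimension pairs with d_n → ∞ as n → ∞. Then σ_{d_n,k_n} → 0 as n → ∞, where σ_{d,k}² = π^{(d−k)/2} · Γ((2k−d−1)/2) / Γ((k−1)/2). -/

import Mathlib

open Filter

/-- `σ_{d,k} > 0` defined by `σ_{d,k}² = π^{(d−k)/2} Γ((2k−d−1)/2)/Γ((k−1)/2)`. -/
noncomputable def sigmaHyp (d k : ℕ) : ℝ :=
  Real.sqrt (Real.pi ^ (((d : ℝ) - k) / 2) * Real.Gamma ((2 * (k : ℝ) - d - 1) / 2) /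
    Real.Gamma (((k : ℝ) - 1) / 2))

/-! Writing `a = (2k-d-1)/2` and `m = (d-k)/2`, both at least `1/2`, we have
`σ_{d,k}² = π^m Γ(a) / Γ(a+m)` with `a + m = (k-1)/2 → ∞`. Log-convexity of `Γ` gives
`(x-1)^t Γ(x) ≤ Γ(x+t)`, hence `π^m Γ(a) / Γ(a+m) ≤ (π/(a-1))^m`, which settles bounded `m`.
For `m ≥ 3`, log-convexity also makes `Γ(x+t)/Γ(x)` increasing in `x`, so
`Γ(a + m/2) ≥ Γ(a) Γ(1/2 + m/2) / Γ(1/2) ≥ Γ(a)/√π`, and the first estimate applied between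
`a + m/2` and `a + m` absorbs `π^m`. Either way `σ_{d,k}² = O((a+m-4)^(-1/2))`. -/

open Real Set

theorem ConvexOn.map_add_sub_map_le_of_le {𝕜 : Type*} [Field 𝕜] [LinearOrder 𝕜]
    [IsStrictOrderedRing 𝕜] {s : Set 𝕜} {f : 𝕜 → 𝕜} (hf : ConvexOn 𝕜 s f) {x y t : 𝕜}
    (hx : x ∈ s) (hyt : y + t ∈ s) (hxy : x ≤ y) (ht : 0 ≤ t) :
    f (x + t) - f x ≤ f (y + t) - f y := by
  rcases ht.eq_or_lt with rfl | ht
  · simp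
  rcases hxy.eq_or_lt with rfl | hxy
  · rfl
  have hxt : x + t ∈ s := hf.1.ordConnected.out hx hyt ⟨by linarith, by linarith⟩
  have hy : y ∈ s := hf.1.ordConnected.out hx hyt ⟨hxy.le, by linarith⟩
  -- both increments are compared with the secant of `f` over `[x, y + t]`
  have h₁ := hf.secant_mono hx hxt hyt (by linarith) (by linarith) (by linarith : x + t ≤ y + t)
  have h₂ := hf.secant_mono hyt hx hy (by linarith) (by linarith) hxy.le
  rw [add_sub_cancel_left] at h₁
  rw [← neg_div_neg_eq, neg_sub, neg_sub, ← neg_div_neg_eq (f y - _), neg_sub, neg_sub,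
    add_sub_cancel_left] at h₂
  have := h₁.trans h₂
  rwa [div_le_div_iff_of_pos_right ht] at this

theorem Real.Gamma_add_mul_Gamma_le {x y t : ℝ} (hx : 0 < x) (hxy : x ≤ y) (ht : 0 ≤ t) :
    Gamma (x + t) * Gamma y ≤ Gamma (y + t) * Gamma x := by
  have hy : 0 < y := hx.trans_le hxy
  have h := convexOn_log_Gamma.map_add_sub_map_le_of_le (mem_Ioi.2 hx)
    (mem_Ioi.2 (by linarith : 0 < y + t)) hxy ht
  simp only [Function.comp_apply] at h
  rw [← log_le_log_iff (by positivity) (by positivity), log_mul (by positivity) (by positivity),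
    log_mul (by positivity) (by positivity)]
  linarith

theorem Real.rpow_mul_Gamma_le_Gamma_add {x t : ℝ} (hx : 1 < x) (ht : 0 ≤ t) :
    (x - 1) ^ t * Gamma x ≤ Gamma (x + t) := by
  rcases ht.eq_or_lt with rfl | ht
  · simp
  have hx₁ : 0 < x - 1 := by linarith
  have h := convexOn_log_Gamma.slope_mono_adjacent (mem_Ioi.2 hx₁)
    (mem_Ioi.2 (by linarith : 0 < x + t)) (by linarith : x - 1 < x) (by linarith : x < x + t)
  have hrec : Gamma x = (x - 1) * Gamma (x - 1) := by
    simpa using Gamma_add_one hx₁.ne'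
  simp only [Function.comp_apply, sub_sub_cancel, div_one, add_sub_cancel_left] at h
  rw [hrec, log_mul hx₁.ne' (Gamma_pos_of_pos hx₁).ne', add_sub_cancel_right, le_div_iff₀ ht] at h
  rw [← log_le_log_iff (by positivity) (by positivity), log_mul (by positivity) (by positivity),
    log_rpow hx₁, hrec, log_mul hx₁.ne' (Gamma_pos_of_pos hx₁).ne']
  linarith

theorem Real.one_le_Gamma {x : ℝ} (hx : 2 ≤ x) : 1 ≤ Gamma x :=
  Gamma_two ▸ Gamma_strictMonoOn_Ici.monotoneOn (mem_Ici.2 le_rfl) hx hx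

theorem Real.rpow_mul_Gamma_div_Gamma_add_le_sqrt {x t c : ℝ} (hx : 1 < x) (ht : 1 / 2 ≤ t)
    (hc : 0 < c) (hcx : c ≤ x - 1) :
    c ^ t * Gamma x / Gamma (x + t) ≤ √(c / (x - 1)) := by
  have hx₁ : 0 < x - 1 := by linarith
  have hΓ : 0 < Gamma x := Gamma_pos_of_pos (by linarith)
  calc c ^ t * Gamma x / Gamma (x + t)
      ≤ c ^ t * Gamma x / ((x - 1) ^ t * Gamma x) :=
        div_le_div_of_nonneg_left (by positivity) (by positivity)
          (rpow_mul_Gamma_le_Gamma_add hx (by linarith))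
    _ = (c / (x - 1)) ^ t := by rw [div_rpow hc.le hx₁.le, mul_div_mul_right _ _ hΓ.ne']
    _ ≤ (c / (x - 1)) ^ (1 / 2 : ℝ) :=
        rpow_le_rpow_of_exponent_ge (by positivity) ((div_le_one hx₁).2 hcx) ht
    _ = √(c / (x - 1)) := (sqrt_eq_rpow _).symm

theorem Real.pi_rpow_mul_Gamma_div_Gamma_add_le {a m : ℝ} (ha : 1 / 2 ≤ a) (hm : 1 / 2 ≤ m)
    (hs : 2 * π ^ 2 + 2 ≤ a + m) :
    π ^ m * Gamma a / Gamma (a + m) ≤ √(2 * π ^ 3 / (a + m - 4)) := by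
  have hπ := pi_gt_three
  have hs₄ : 0 < a + m - 4 := by nlinarith
  have hΓ : 0 < Gamma (a + m) := Gamma_pos_of_pos (by linarith)
  rcases lt_or_ge m 3 with hm₃ | hm₃
  · calc π ^ m * Gamma a / Gamma (a + m) ≤ √(π / (a - 1)) :=
          rpow_mul_Gamma_div_Gamma_add_le_sqrt (by nlinarith) hm pi_pos (by nlinarith)
      _ ≤ √(2 * π ^ 3 / (a + m - 4)) :=
          sqrt_le_sqrt (div_le_div₀ (by positivity) (by nlinarith) hs₄ (by linarith))
  · have hΓa : Gamma a ≤ √π * Gamma (a + m / 2) := by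
      have h := Gamma_add_mul_Gamma_le (x := 1 / 2) (y := a) (t := m / 2) (by norm_num) ha
        (by linarith)
      rw [Gamma_one_half_eq] at h
      have h₁ := one_le_Gamma (x := 1 / 2 + m / 2) (by linarith)
      nlinarith [Gamma_pos_of_pos (by linarith : 0 < a)]
    have hpow : π ^ m = (π ^ 2) ^ (m / 2) := by
      rw [← rpow_natCast, ← rpow_mul pi_pos.le]
      ring_nf
    calc π ^ m * Gamma a / Gamma (a + m)
        ≤ π ^ m * (√π * Gamma (a + m / 2)) / Gamma (a + m) := by gcongr
      _ = √π * ((π ^ 2) ^ (m / 2) * Gamma (a + m / 2) / Gamma (a + m / 2 + m / 2)) := by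
          rw [hpow, add_assoc, add_halves]
          ring
      _ ≤ √π * √(π ^ 2 / (a + m / 2 - 1)) := by
          gcongr
          exact rpow_mul_Gamma_div_Gamma_add_le_sqrt (by nlinarith) (by linarith) (by positivity)
            (by linarith)
      _ = √(π ^ 3 / (a + m / 2 - 1)) := by
          rw [← sqrt_mul pi_pos.le]
          ring_nf
      _ ≤ √(2 * π ^ 3 / (a + m - 4)) := by
          refine sqrt_le_sqrt ?_
          rw [div_le_div_iff₀ (by nlinarith) hs₄]
          nlinarith [pow_pos pi_pos 3]

theorem Real.tendsto_pi_rpow_mul_Gamma_div_Gamma_add {ι : Type*} {l : Filter ι} {a m : ι → ℝ}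
    (ha : ∀ i, 1 / 2 ≤ a i) (hm : ∀ i, 1 / 2 ≤ m i) (hs : Tendsto (fun i ↦ a i + m i) l atTop) :
    Tendsto (fun i ↦ π ^ m i * Gamma (a i) / Gamma (a i + m i)) l (nhds 0) := by
  have hbound : Tendsto (fun s : ℝ ↦ √(2 * π ^ 3 / (s - 4))) atTop (nhds 0) := by
    simpa [Function.comp_def, sub_eq_add_neg] using (continuous_sqrt.tendsto 0).comp
      (tendsto_const_nhds.div_atTop (tendsto_atTop_add_const_right _ (-4) tendsto_id))
  refine squeeze_zero' (Eventually.of_forall fun i ↦ ?_) ?_ (hbound.comp hs)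
  · have := Gamma_pos_of_pos (by linarith [ha i] : 0 < a i)
    have := Gamma_pos_of_pos (by linarith [ha i, hm i] : 0 < a i + m i)
    positivity
  · filter_upwards [hs.eventually_ge_atTop (2 * π ^ 2 + 2)] with i hi
    exact pi_rpow_mul_Gamma_div_Gamma_add_le (ha i) (hm i) hi

/-- If `(d_n,k_n)` is an admissible sequence (i.e. `1 ≤ k_n ≤ d_n−1` and `2k_n > d_n+1`)
with `d_n → ∞`, then `σ_{d_n,k_n} → 0`. -/
theorem sigmaHyp_tendsto_zero (d k : ℕ → ℕ)
    (hadm : ∀ n, 1 ≤ k n ∧ k n + 1 ≤ d n ∧ d n + 1 < 2 * k n)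
    (hd : Tendsto d atTop atTop) :
    Tendsto (fun n => sigmaHyp (d n) (k n)) atTop (nhds 0) := by
  have hkd (n : ℕ) : (k n : ℝ) + 1 ≤ d n := by exact_mod_cast (hadm n).2.1
  have hdk (n : ℕ) : (d n : ℝ) + 2 ≤ 2 * k n := by exact_mod_cast (hadm n).2.2
  have hs : Tendsto (fun n ↦ (2 * (k n : ℝ) - d n - 1) / 2 + ((d n : ℝ) - k n) / 2) atTop atTop :=
    tendsto_atTop_mono (fun n ↦ by simp only [Function.comp_apply]; linarith [hdk n])
      ((tendsto_natCast_atTop_atTop.comp hd).atTop_div_const (by norm_num : (0 : ℝ) < 4))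
  have h := (Real.continuous_sqrt.tendsto' 0 0 Real.sqrt_zero).comp
    (Real.tendsto_pi_rpow_mul_Gamma_div_Gamma_add (fun n ↦ by linarith [hdk n])
      (fun n ↦ by linarith [hkd n]) hs)
  refine h.congr fun n ↦ ?_
  simp only [sigmaHyp, Function.comp_apply]
  ring_nf
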